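/- Let v ∈ ℂ^p and let M be the (p+2)×(p+2) complex symmetric-block matrix [[0_p, C],[Cᵗ, 0₂]] where C is the p×2 matrix with columns v and i·v. Then trace([M, Mᴴ]²) = 16·‖v‖⁴ − 8·|⟨v, conj(v)⟩|² and trace(MᴴM) = 4·‖v‖²; consequently −trace([M,Mᴴ]²)/(trace(MᴴM))² lies in [−1, −1/2] for all nonzero v. -/

import Mathlib

/-!
Writing `e = (1, i)`, the block `C` is the rank-one matrix `v eᵀ`. For any rank-one block
`C = x yᵀ`, the commutator `[M, Mᴴ]` is block diagonal with blocks
`⟨y, ȳ⟩ (x x̄ᵀ - x̄ xᵀ)` and `⟨x, x̄⟩ (y ȳᵀ - ȳ yᵀ)`, and `tr ((a bᵀ - b aᵀ)²) = 2(⟨a, b⟩² - ⟨a, a⟩⟨b, b⟩)`.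
Since `⟨e, ē⟩ = 2` and `⟨e, e⟩ = 0`, this gives both trace formulas; the bounds on the ratio then
amount to `0 ≤ |⟨v, v̄⟩|² ≤ ‖v‖⁴`.
-/

open Matrix Complex

namespace Matrix

variable {l m n o α : Type*}

theorem fromBlocks_sub [Sub α] (A : Matrix n l α) (B : Matrix n m α) (C : Matrix o l α)
    (D : Matrix o m α) (A' : Matrix n l α) (B' : Matrix n m α) (C' : Matrix o l α)
    (D' : Matrix o m α) :
    fromBlocks A B C D - fromBlocks A' B' C' D' =
      fromBlocks (A - A') (B - B') (C - C') (D - D') := by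
  ext (_ | _) (_ | _) <;> rfl

def offDiagBlocks [Zero α] (C : Matrix m n α) : Matrix (m ⊕ n) (m ⊕ n) α :=
  fromBlocks 0 C Cᵀ 0

variable [Fintype m] [Fintype n]

theorem trace_fromBlocks [AddCommMonoid α] (A : Matrix m m α)
    (B : Matrix m n α) (C : Matrix n m α) (D : Matrix n n α) :
    trace (fromBlocks A B C D) = trace A + trace D := by
  simp [trace, Fintype.sum_sum_type]

variable [CommRing α]

theorem trace_mul_self_smul_vecMulVec_sub (c : α) (x y : m → α) :
    trace ((c • (vecMulVec x y - vecMulVec y x)) * (c • (vecMulVec x y - vecMulVec y x))) =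
      2 * c ^ 2 * ((x ⬝ᵥ y) ^ 2 - (x ⬝ᵥ x) * (y ⬝ᵥ y)) := by
  simp only [smul_mul_smul, sub_mul, mul_sub, vecMulVec_mul_vecMulVec, trace_smul, trace_sub,
    trace_vecMulVec, dotProduct_smul, smul_eq_mul, dotProduct_comm y x]
  ring

variable [StarRing α]

theorem commutator_offDiagBlocks_vecMulVec (x : m → α) (y : n → α) :
    let M := offDiagBlocks (vecMulVec x y)
    M * Mᴴ - Mᴴ * M =
      fromBlocks ((y ⬝ᵥ star y) • (vecMulVec x (star x) - vecMulVec (star x) x)) 0 0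
        ((x ⬝ᵥ star x) • (vecMulVec y (star y) - vecMulVec (star y) y)) := by
  simp [offDiagBlocks, fromBlocks_conjTranspose, fromBlocks_multiply, fromBlocks_sub,
    transpose_vecMulVec, conjTranspose_vecMulVec, vecMulVec_mul_vecMulVec, smul_sub, vecMulVec_smul,
    dotProduct_comm (star y), dotProduct_comm (star x)]

theorem trace_conjTranspose_mul_offDiagBlocks_vecMulVec (x : m → α) (y : n → α) :
    let M := offDiagBlocks (vecMulVec x y)
    trace (Mᴴ * M) = 2 * (x ⬝ᵥ star x) * (y ⬝ᵥ star y) := by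
  simp [offDiagBlocks, fromBlocks_conjTranspose, fromBlocks_multiply, trace_fromBlocks,
    vecMulVec_mul_vecMulVec, dotProduct_comm (star y), dotProduct_comm (star x)]
  ring

theorem trace_sq_commutator_offDiagBlocks_vecMulVec (x : m → α) (y : n → α) :
    let M := offDiagBlocks (vecMulVec x y)
    trace ((M * Mᴴ - Mᴴ * M) * (M * Mᴴ - Mᴴ * M)) =
      2 * (y ⬝ᵥ star y) ^ 2 * ((x ⬝ᵥ star x) ^ 2 - (x ⬝ᵥ x) * (star x ⬝ᵥ star x)) +
        2 * (x ⬝ᵥ star x) ^ 2 * ((y ⬝ᵥ star y) ^ 2 - (y ⬝ᵥ y) * (star y ⬝ᵥ star y)) := by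
  intro M
  rw [commutator_offDiagBlocks_vecMulVec, fromBlocks_multiply, trace_fromBlocks]
  simp only [Matrix.mul_zero, add_zero, zero_add]
  rw [trace_mul_self_smul_vecMulVec_sub, trace_mul_self_smul_vecMulVec_sub]

end Matrix

theorem Complex.dotProduct_star_self_eq_sum_norm_sq {n : Type*} [Fintype n] (v : n → ℂ) :
    v ⬝ᵥ star v = ((∑ j, ‖v j‖ ^ 2 : ℝ) : ℂ) := by
  push_cast
  exact Finset.sum_congr rfl fun j _ => mul_conj' (v j)

theorem Complex.dotProduct_self_mul_star_eq_norm_sq {n : Type*} [Fintype n] (v : n → ℂ) :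
    (v ⬝ᵥ v) * (star v ⬝ᵥ star v) = ((‖∑ j, v j ^ 2‖ ^ 2 : ℝ) : ℂ) := by
  rw [star_dotProduct_star, ofReal_pow, ← mul_conj', star_def]
  simp [dotProduct, sq]

theorem Complex.norm_sum_sq_le_sum_norm_sq {n : Type*} [Fintype n] (v : n → ℂ) :
    ‖∑ j, v j ^ 2‖ ≤ ∑ j, ‖v j‖ ^ 2 :=
  (norm_sum_le _ _).trans_eq (by simp_rw [norm_pow])

theorem curvature_ratio_mem_Icc {s h : ℝ} (hs : 0 < s) (h0 : 0 ≤ h) (hle : h ≤ s ^ 2) :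
    -(16 * s ^ 2 - 8 * h) / (4 * s) ^ 2 ∈ Set.Icc (-1) (-(1 / 2)) := by
  have hd : (0 : ℝ) < (4 * s) ^ 2 := by positivity
  constructor
  · rw [le_div_iff₀ hd]; nlinarith
  · rw [div_le_iff₀ hd]; nlinarith

theorem stmt19 (p : ℕ) (v : Fin p → ℂ) :
    let C : Matrix (Fin p) (Fin 2) ℂ :=
      Matrix.of fun i j => if j = 0 then v i else Complex.I * v i
    let M : Matrix (Fin p ⊕ Fin 2) (Fin p ⊕ Fin 2) ℂ :=
      Matrix.fromBlocks 0 C Cᵀ 0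
    ((M * Mᴴ - Mᴴ * M) * (M * Mᴴ - Mᴴ * M)).trace =
        ((16 * (∑ j, ‖v j‖ ^ 2) ^ 2 - 8 * ‖∑ j, (v j) ^ 2‖ ^ 2 : ℝ) : ℂ) ∧
    (Mᴴ * M).trace = ((4 * ∑ j, ‖v j‖ ^ 2 : ℝ) : ℂ) ∧
    (v ≠ 0 →
      -1 ≤ -(((M * Mᴴ - Mᴴ * M) * (M * Mᴴ - Mᴴ * M)).trace.re) /
            ((Mᴴ * M).trace.re) ^ 2 ∧
      -(((M * Mᴴ - Mᴴ * M) * (M * Mᴴ - Mᴴ * M)).trace.re) /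
            ((Mᴴ * M).trace.re) ^ 2 ≤ -(1 / 2 : ℝ)) := by
  intro C M
  have hC : C = vecMulVec v ![1, I] := by
    ext i j; fin_cases j <;> simp [C, vecMulVec_apply, mul_comm]
  have hM : M = offDiagBlocks (vecMulVec v ![1, I]) := by rw [← hC]; rfl
  have hy : ![1, I] ⬝ᵥ star ![1, I] = 2 ∧ ![1, I] ⬝ᵥ ![1, I] = 0 := by
    constructor <;> norm_num [dotProduct, Fin.sum_univ_two]
  have hcomm : ((M * Mᴴ - Mᴴ * M) * (M * Mᴴ - Mᴴ * M)).trace =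
      ((16 * (∑ j, ‖v j‖ ^ 2) ^ 2 - 8 * ‖∑ j, (v j) ^ 2‖ ^ 2 : ℝ) : ℂ) := by
    rw [hM, trace_sq_commutator_offDiagBlocks_vecMulVec, hy.1, hy.2,
      dotProduct_self_mul_star_eq_norm_sq, dotProduct_star_self_eq_sum_norm_sq]
    push_cast; ring
  have hnorm : (Mᴴ * M).trace = ((4 * ∑ j, ‖v j‖ ^ 2 : ℝ) : ℂ) := by
    rw [hM, trace_conjTranspose_mul_offDiagBlocks_vecMulVec, hy.1,
      dotProduct_star_self_eq_sum_norm_sq]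
    push_cast; ring
  refine ⟨hcomm, hnorm, fun hv => ?_⟩
  rw [hcomm, hnorm, ofReal_re, ofReal_re]
  obtain ⟨j, hj⟩ := Function.ne_iff.mp hv
  have hpos : 0 < ∑ j, ‖v j‖ ^ 2 :=
    Finset.sum_pos' (fun _ _ => by positivity) ⟨j, Finset.mem_univ j, by positivity⟩
  exact curvature_ratio_mem_Icc hpos (by positivity)
    (pow_le_pow_left₀ (norm_nonneg _) (norm_sum_sq_le_sum_norm_sq v) 2)
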